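/- arXiv:1505.00730 — 3 statements merged into one kernel-verified Lean document; each statement's English description precedes it below -/
import Mathlib

section
/- Let k = k(n) be an integer-valued function with 3·ln n ≤ k(n) ≤ n/8 for all large n, and let p = p(n) satisfy 3·ln(n/k(n))/k(n) ≤ p(n) ≤ 1. Then the probability that the random graph G ~ G(n,p(n)) is k(n)-pseudorandom tends to 1 as n → ∞. -/
open MeasureTheory Filter

/-- The Bernoulli measure on `Bool` with success probability `p`. -/
noncomputable def bernoulliBool (p : ℝ) : Measure Bool :=
  (ENNReal.ofReal p) • Measure.dirac true + (ENNReal.ofReal (1 - p)) • Measure.dirac false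

/-- The binomial random graph measure `G(n,p)`: each potential edge (pair of distinct
vertices of `Fin n`) is present independently with probability `p`. An outcome is an
indicator function on unordered pairs. -/
noncomputable def gnp (n : ℕ) (p : ℝ) : Measure (Sym2 (Fin n) → Bool) :=
  Measure.pi fun _ => bernoulliBool p

/-- The simple graph on `[n]` determined by an outcome `ω` of `G(n,p)`. -/
def graphOf {n : ℕ} (ω : Sym2 (Fin n) → Bool) : SimpleGraph (Fin n) where
  Adj v w := v ≠ w ∧ ω s(v, w) = true
  symm := by
    constructor
    intro v w h
    exact ⟨h.1.symm, by rw [Sym2.eq_swap]; exact h.2⟩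
  loopless := by
    constructor
    intro v h
    exact h.1 rfl

instance graphOfDecidableAdj {n : ℕ} (ω : Sym2 (Fin n) → Bool) :
    DecidableRel (graphOf ω).Adj :=
  fun v w => inferInstanceAs (Decidable (v ≠ w ∧ ω s(v, w) = true))

/-- A graph is `k`-pseudorandom if any two disjoint vertex sets of size at least `k`
have an edge between them. -/
def IsPseudorandom {V : Type*} (G : SimpleGraph V) (k : ℕ) : Prop :=
  ∀ A B : Finset V, Disjoint A B → k ≤ A.card → k ≤ B.card →
    ∃ a ∈ A, ∃ b ∈ B, G.Adj a b


/-!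
Union bound over pairs of disjoint `k`-sets. A fixed pair spans no edge with probability
`(1 - p)^(k²) ≤ exp (-p k²) ≤ (k/n)^(3k)`, and there are at most `C(n,k)² ≤ (e n/k)^(2k)` pairs,
so `G(n,p)` fails to be `k`-pseudorandom with probability at most `(e² k/n)^k ≤ (e²/8)^k`.
This tends to `0` because `e² < 8` and `k ≥ 3 log n → ∞`.
-/

open Finset Real Topology
open scoped Nat

lemma isProbabilityMeasure_bernoulliBool {p : ℝ} (h0 : 0 ≤ p) (h1 : p ≤ 1) :
    IsProbabilityMeasure (bernoulliBool p) :=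
  ⟨by simp [bernoulliBool, ← ENNReal.ofReal_add h0 (sub_nonneg.2 h1)]⟩

lemma bernoulliBool_singleton_false (p : ℝ) :
    bernoulliBool p {false} = ENNReal.ofReal (1 - p) := by
  simp [bernoulliBool]

lemma gnp_pi_singleton_false {n : ℕ} {p : ℝ} (h0 : 0 ≤ p) (h1 : p ≤ 1)
    (S : Finset (Sym2 (Fin n))) :
    gnp n p ((S : Set (Sym2 (Fin n))).pi fun _ => {false}) = ENNReal.ofReal (1 - p) ^ #S := by
  have := isProbabilityMeasure_bernoulliBool h0 h1
  simp [gnp, bernoulliBool_singleton_false]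

lemma isProbabilityMeasure_gnp {n : ℕ} {p : ℝ} (h0 : 0 ≤ p) (h1 : p ≤ 1) :
    IsProbabilityMeasure (gnp n p) :=
  have := isProbabilityMeasure_bernoulliBool h0 h1
  Measure.pi.instIsProbabilityMeasure _

lemma card_image_sym2Mk_product {V : Type*} [DecidableEq V] {A B : Finset V}
    (h : Disjoint A B) : #((A ×ˢ B).image fun ab => s(ab.1, ab.2)) = #A * #B := by
  rw [card_image_of_injOn, card_product]
  rintro ⟨a, b⟩ hab ⟨a', b'⟩ hab' heq
  simp only [coe_product, Set.mem_prod, mem_coe] at hab hab'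
  rcases Sym2.eq_iff.1 heq with ⟨rfl, rfl⟩ | ⟨rfl, rfl⟩
  · rfl
  · exact (disjoint_left.1 h hab.1 hab'.2).elim

lemma exists_card_eq_of_not_isPseudorandom {V : Type*} {G : SimpleGraph V} {K : ℕ}
    (h : ¬ IsPseudorandom G K) :
    ∃ A B : Finset V, Disjoint A B ∧ #A = K ∧ #B = K ∧ ∀ a ∈ A, ∀ b ∈ B, ¬ G.Adj a b := by
  simp only [IsPseudorandom, not_forall, not_exists, not_and] at h
  obtain ⟨A, B, hAB, hA, hB, hno⟩ := h
  obtain ⟨A', hA', hA'K⟩ := exists_subset_card_eq hA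
  obtain ⟨B', hB', hB'K⟩ := exists_subset_card_eq hB
  exact ⟨A', B', hAB.mono hA' hB', hA'K, hB'K, fun a ha b hb => hno a (hA' ha) b (hB' hb)⟩

lemma gnp_not_isPseudorandom_le {n K : ℕ} {p : ℝ} (h0 : 0 ≤ p) (h1 : p ≤ 1) :
    gnp n p {ω | ¬ IsPseudorandom (graphOf ω) K} ≤
      ENNReal.ofReal ((n.choose K : ℝ) ^ 2 * (1 - p) ^ (K * K)) := by
  classical
  set P := ((univ : Finset (Fin n)).powersetCard K ×ˢ univ.powersetCard K).filter
    fun AB => Disjoint AB.1 AB.2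
  let E : Finset (Fin n) × Finset (Fin n) → Set (Sym2 (Fin n) → Bool) := fun AB =>
    (((AB.1 ×ˢ AB.2).image fun ab => s(ab.1, ab.2) : Finset _) : Set _).pi fun _ => {false}
  have hcover : {ω | ¬ IsPseudorandom (graphOf ω) K} ⊆ ⋃ AB ∈ P, E AB := by
    intro ω hω
    obtain ⟨A, B, hAB, hA, hB, hno⟩ := exists_card_eq_of_not_isPseudorandom hω
    refine Set.mem_biUnion (x := (A, B)) (by simp [P, hAB, hA, hB]) ?_
    simp only [E, coe_image, coe_product, Set.forall_mem_image, Set.mem_pi, Set.mem_prod,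
      mem_coe, Set.mem_singleton_iff]
    rintro ⟨a, b⟩ ⟨ha, hb⟩
    have hne : a ≠ b := fun h => disjoint_left.1 hAB ha (h ▸ hb)
    simpa [graphOf, hne] using hno a ha b hb
  have hcard : #P ≤ n.choose K ^ 2 := by
    refine (card_filter_le _ _).trans ?_
    simp [sq]
  calc gnp n p {ω | ¬ IsPseudorandom (graphOf ω) K}
      ≤ ∑ AB ∈ P, gnp n p (E AB) := (measure_mono hcover).trans (measure_biUnion_finset_le _ _)
    _ = ∑ AB ∈ P, ENNReal.ofReal (1 - p) ^ (K * K) := sum_congr rfl fun AB hAB => by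
        simp only [P, mem_filter, mem_product, mem_powersetCard] at hAB
        rw [gnp_pi_singleton_false h0 h1, card_image_sym2Mk_product hAB.2, hAB.1.1.2, hAB.1.2.2]
    _ ≤ n.choose K ^ 2 * ENNReal.ofReal (1 - p) ^ (K * K) := by
        rw [sum_const, nsmul_eq_mul]
        gcongr
        exact_mod_cast hcard
    _ = ENNReal.ofReal ((n.choose K : ℝ) ^ 2 * (1 - p) ^ (K * K)) := by
        rw [ENNReal.ofReal_mul (by positivity), ENNReal.ofReal_pow (sub_nonneg.2 h1),
          ENNReal.ofReal_pow (Nat.cast_nonneg _), ENNReal.ofReal_natCast]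

lemma choose_le_exp_mul_div_pow (n K : ℕ) : (n.choose K : ℝ) ≤ (exp 1 * n / K) ^ K :=
  calc (n.choose K : ℝ) ≤ n ^ K / K ! := Nat.choose_le_pow_div K n
    _ = (n / K) ^ K * (K ^ K / K !) := by
        rw [div_pow, div_mul_div_cancel₀ (mod_cast Nat.pow_self_pos.ne')]
    _ ≤ (n / K) ^ K * exp K := by
        gcongr
        exact pow_div_factorial_le_exp _ (Nat.cast_nonneg K) K
    _ = (exp 1 * n / K) ^ K := by
        rw [← exp_one_pow, mul_div_assoc, mul_pow, mul_comm]

lemma one_sub_pow_le_div_pow {n K : ℕ} {p : ℝ} (hK : 0 < K) (hKn : K ≤ n)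
    (hp : 3 * log (n / K) / K ≤ p) (hp1 : p ≤ 1) :
    (1 - p) ^ (K * K) ≤ ((K : ℝ) / n) ^ (3 * K) := by
  have hK' : (0 : ℝ) < K := by exact_mod_cast hK
  have hn : (0 : ℝ) < n := by exact_mod_cast hK.trans_le hKn
  have hpK : 3 * log (n / K) ≤ p * K := (div_le_iff₀ hK').1 hp
  calc (1 - p) ^ (K * K) ≤ exp (-p) ^ (K * K) :=
        pow_le_pow_left₀ (by linarith) (one_sub_le_exp_neg p) _
    _ = exp (-(p * K)) ^ K := by
        rw [pow_mul, ← exp_nat_mul]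
        ring_nf
    _ ≤ exp (-(3 * log (n / K))) ^ K := by gcongr
    _ = ((K : ℝ) / n) ^ (3 * K) := by
        rw [pow_mul, show -(3 * log (n / K)) = log (((K : ℝ) / n) ^ 3) by
          rw [log_pow, ← inv_div, log_inv]; push_cast; ring, exp_log (by positivity)]

lemma choose_sq_mul_one_sub_pow_le {n K : ℕ} {p : ℝ} (hK : 0 < K) (hKn : K ≤ n)
    (hp : 3 * log (n / K) / K ≤ p) (hp1 : p ≤ 1) :
    (n.choose K : ℝ) ^ 2 * (1 - p) ^ (K * K) ≤ (exp 1 ^ 2 * K / n) ^ K := by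
  have hK' : (K : ℝ) ≠ 0 := by positivity
  have hn : (n : ℝ) ≠ 0 := by exact_mod_cast (hK.trans_le hKn).ne'
  calc (n.choose K : ℝ) ^ 2 * (1 - p) ^ (K * K)
      ≤ ((exp 1 * n / K) ^ K) ^ 2 * ((K : ℝ) / n) ^ (3 * K) := by
        gcongr
        · exact choose_le_exp_mul_div_pow n K
        · exact one_sub_pow_le_div_pow hK hKn hp hp1
    _ = ((exp 1 * n / K) ^ 2 * ((K : ℝ) / n) ^ 3) ^ K := by ring
    _ = (exp 1 ^ 2 * K / n) ^ K := by
        congr 1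
        field_simp

lemma tendsto_measure_nhds_one_of_compl {ι : Type*} {l : Filter ι} {Ω : ι → Type*}
    [∀ i, MeasurableSpace (Ω i)] {μ : ∀ i, Measure (Ω i)} {s : ∀ i, Set (Ω i)}
    (hμ : ∀ᶠ i in l, IsProbabilityMeasure (μ i))
    (h : Tendsto (fun i => μ i (s i)ᶜ) l (𝓝 0)) : Tendsto (fun i => μ i (s i)) l (𝓝 1) := by
  have hlow : Tendsto (fun i => 1 - μ i (s i)ᶜ) l (𝓝 1) := by
    simpa using ENNReal.Tendsto.sub tendsto_const_nhds h (Or.inl ENNReal.one_ne_top)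
  refine tendsto_of_tendsto_of_tendsto_of_le_of_le' hlow tendsto_const_nhds ?_ ?_
  · filter_upwards [hμ] with i hi
    rw [tsub_le_iff_right, ← measure_univ (μ := μ i), ← Set.union_compl_self (s i)]
    exact measure_union_le _ _
  · filter_upwards [hμ] with i hi
    exact prob_le_one

lemma three_mul_log_div_div_nonneg {n K : ℕ} (hKn : K ≤ n) :
    0 ≤ 3 * log ((n : ℝ) / K) / K := by
  rcases K.eq_zero_or_pos with rfl | hK
  · simp
  have hK' : (0 : ℝ) < K := by exact_mod_cast hK
  have hlog : 0 ≤ log ((n : ℝ) / K) := log_nonneg ((one_le_div hK').2 (by exact_mod_cast hKn))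
  positivity

lemma gnp_not_isPseudorandom_le_pow {n K : ℕ} {p : ℝ} (hK : 0 < K) (hKn : (K : ℝ) ≤ n / 8)
    (hp : 3 * log (n / K) / K ≤ p) (h0 : 0 ≤ p) (h1 : p ≤ 1) :
    gnp n p {ω | ¬ IsPseudorandom (graphOf ω) K} ≤ ENNReal.ofReal ((exp 1 ^ 2 / 8) ^ K) := by
  have hK' : (0 : ℝ) < K := by exact_mod_cast hK
  have hKn' : K ≤ n := by exact_mod_cast (show (K : ℝ) ≤ n by linarith)
  refine (gnp_not_isPseudorandom_le h0 h1).trans (ENNReal.ofReal_le_ofReal ?_)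
  refine (choose_sq_mul_one_sub_pow_le hK hKn' hp h1).trans (pow_le_pow_left₀ ?_ ?_ _)
  · positivity
  · rw [div_le_div_iff₀ (by linarith) (by norm_num)]
    nlinarith [exp_pos 1]

theorem statement0 (k : ℕ → ℕ) (p : ℕ → ℝ)
    (hk : ∀ᶠ n : ℕ in atTop,
      3 * Real.log n ≤ (k n : ℝ) ∧ (k n : ℝ) ≤ (n : ℝ) / 8)
    (hp : ∀ n : ℕ,
      3 * Real.log ((n : ℝ) / (k n : ℝ)) / (k n : ℝ) ≤ p n ∧ p n ≤ 1) :
    Tendsto (fun n : ℕ => gnp n (p n) {ω | IsPseudorandom (graphOf ω) (k n)})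
      atTop (nhds 1) := by
  have hk_top : Tendsto k atTop atTop := by
    rw [← tendsto_natCast_atTop_iff (R := ℝ)]
    refine tendsto_atTop_mono' _ (hk.mono fun n hn => hn.1) ?_
    exact (tendsto_log_atTop.comp tendsto_natCast_atTop_atTop).const_mul_atTop three_pos
  have hr : exp 1 ^ 2 / 8 < 1 := by nlinarith [exp_one_lt_d9, exp_pos 1]
  have hbound : ∀ᶠ n in atTop, 0 ≤ p n ∧
      gnp n (p n) {ω | ¬ IsPseudorandom (graphOf ω) (k n)} ≤
        ENNReal.ofReal ((exp 1 ^ 2 / 8) ^ k n) := by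
    filter_upwards [hk_top.eventually_gt_atTop 0, hk] with n hk0 ⟨_, hkn⟩
    have hkn' : k n ≤ n := by exact_mod_cast (show (k n : ℝ) ≤ n by linarith)
    have hp0 : 0 ≤ p n := (three_mul_log_div_div_nonneg hkn').trans (hp n).1
    exact ⟨hp0, gnp_not_isPseudorandom_le_pow hk0 hkn (hp n).1 hp0 (hp n).2⟩
  refine tendsto_measure_nhds_one_of_compl
    (hbound.mono fun n hn => isProbabilityMeasure_gnp hn.1 (hp n).2) ?_
  refine tendsto_of_tendsto_of_tendsto_of_le_of_le' tendsto_const_nhds ?_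
    (Eventually.of_forall fun _ => zero_le) (hbound.mono fun _ hn => hn.2)
  simpa using ENNReal.tendsto_ofReal ((tendsto_pow_atTop_nhds_zero_of_lt_one
    (by positivity) hr).comp hk_top)
end

section
/- Let G = (V, E) be a finite bipartite graph with bipartition V = A ∪ B, and let k be a natural number. Suppose that for every subset I ⊆ A we have |N(I)| ≥ k·|I|, where N(I) denotes the set of all vertices adjacent to at least one vertex of I. Then for every i ∈ A there exists a subset J_i ⊆ N(i) of size |J_i| = k such that the sets (J_i)_{i ∈ A} are pairwise disjoint. -/
/-! Replace every `i` by `k` copies `(i, 0), …, (i, k - 1)`, each with the candidate set `t i`.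
The hypothesis `k * #I ≤ #N(I)` is exactly Hall's condition for the copies, so Hall's marriage
theorem gives a system of distinct representatives; the `k` representatives of the copies of `i`
form `J i`. -/

open Finset Function

theorem Finset.exists_pairwise_disjoint_card_eq_of_mul_card_le_card_biUnion {ι α : Type*}
    [DecidableEq α] (t : ι → Finset α) (k : ℕ)
    (hall : ∀ s : Finset ι, k * #s ≤ #(s.biUnion t)) :
    ∃ J : ι → Finset α, (∀ i, J i ⊆ t i ∧ #(J i) = k) ∧ Pairwise (Disjoint on J) := by
  classical
  have hall_copies : ∀ s : Finset (ι × Fin k), #s ≤ #(s.biUnion fun p => t p.1) := by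
    intro s
    calc #s ≤ #(s.image Prod.fst ×ˢ (univ : Finset (Fin k))) :=
          card_le_card (subset_product.trans (product_subset_product_right (subset_univ _)))
      _ = k * #(s.image Prod.fst) := by rw [card_product, card_univ, Fintype.card_fin, mul_comm]
      _ ≤ #((s.image Prod.fst).biUnion t) := hall _
      _ = #(s.biUnion fun p => t p.1) := by rw [image_biUnion]
  obtain ⟨f, hf_inj, hf_mem⟩ := (all_card_le_biUnion_card_iff_exists_injective _).mp hall_copies
  refine ⟨fun i => univ.map ⟨fun m => f (i, m), hf_inj.comp (Prod.mk_right_injective i)⟩,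
    fun i => ⟨?_, by simp⟩, fun i j hij => ?_⟩
  · simp only [subset_iff, mem_map, mem_univ, true_and, Embedding.coeFn_mk]
    rintro _ ⟨m, rfl⟩
    exact hf_mem (i, m)
  · simp only [onFun, disjoint_left, mem_map, mem_univ, true_and,
      Embedding.coeFn_mk, not_exists]
    rintro _ ⟨m, rfl⟩ m' h
    exact hij (congrArg Prod.fst (hf_inj h)).symm

theorem Finset.exists_disjoint_card_eq_of_mul_card_le_card_biUnion {ι α : Type*}
    [DecidableEq α] (A : Finset ι) (t : ι → Finset α) (k : ℕ)
    (hall : ∀ I ⊆ A, k * #I ≤ #(I.biUnion t)) :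
    ∃ J : ι → Finset α, (∀ i ∈ A, J i ⊆ t i ∧ #(J i) = k) ∧
      ∀ i ∈ A, ∀ j ∈ A, i ≠ j → Disjoint (J i) (J j) := by
  classical
  obtain ⟨J, hJ, hJ_disj⟩ := exists_pairwise_disjoint_card_eq_of_mul_card_le_card_biUnion
    (fun i : A => t i) k fun s => by
      have := hall (s.map (Embedding.subtype _)) fun _ => property_of_mem_map_subtype s
      rwa [card_map, map_eq_image, image_biUnion] at this
  refine ⟨fun i => if hi : i ∈ A then J ⟨i, hi⟩ else ∅, fun i hi => ?_, fun i hi j hj hij => ?_⟩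
  · simpa [hi] using hJ ⟨i, hi⟩
  · simpa [hi, hj] using hJ_disj (Subtype.coe_ne_coe.mp hij : (⟨i, hi⟩ : A) ≠ ⟨j, hj⟩)

theorem statement8_general {V : Type*} [Fintype V] [DecidableEq V] (G : SimpleGraph V)
    [DecidableRel G.Adj] (A : Finset V)
    (k : ℕ)
    (hexp : ∀ I ⊆ A, k * I.card ≤ (I.biUnion fun i => G.neighborFinset i).card) :
    ∃ J : V → Finset V,
      (∀ i ∈ A, J i ⊆ G.neighborFinset i ∧ (J i).card = k) ∧
      ∀ i ∈ A, ∀ j ∈ A, i ≠ j → Disjoint (J i) (J j) :=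
  exists_disjoint_card_eq_of_mul_card_le_card_biUnion A _ k hexp

theorem statement8 {V : Type*} [Fintype V] [DecidableEq V] (G : SimpleGraph V)
    [DecidableRel G.Adj] (A B : Finset V)
    (hpart : ∀ v : V, v ∈ A ∨ v ∈ B) (hdisj : Disjoint A B)
    (hbip : ∀ u v : V, G.Adj u v → (u ∈ A ∧ v ∈ B) ∨ (u ∈ B ∧ v ∈ A))
    (k : ℕ)
    (hexp : ∀ I ⊆ A, k * I.card ≤ (I.biUnion fun i => G.neighborFinset i).card) :
    ∃ J : V → Finset V,
      (∀ i ∈ A, J i ⊆ G.neighborFinset i ∧ (J i).card = k) ∧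
      ∀ i ∈ A, ∀ j ∈ A, i ≠ j → Disjoint (J i) (J j) :=
  statement8_general G A k hexp
end

section
/- Let G be a graph on n vertices with exactly n + k edges (k ≥ 0 an integer), with no isolated vertices and with at most two vertices of degree 1. Let A be the set of vertices of G whose degree is not equal to 2. Then the sum of the degrees of the vertices in A equals 2|A| + 2k, and consequently |A ∪ N_G(A)| ≤ 8k + 12, where N_G(A) denotes the set of vertices adjacent in G to at least one vertex of A. -/
theorem statement13 (n k : ℕ) (G : SimpleGraph (Fin n)) [DecidableRel G.Adj]
    (hedges : G.edgeFinset.card = n + k)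
    (hiso : ∀ v : Fin n, 0 < G.degree v)
    (hdeg1 : (Finset.univ.filter fun v : Fin n => G.degree v = 1).card ≤ 2)
    (A : Finset (Fin n))
    (hA : A = Finset.univ.filter fun v : Fin n => G.degree v ≠ 2) :
    (∑ v ∈ A, G.degree v) = 2 * A.card + 2 * k ∧
      (A ∪ A.biUnion fun v => G.neighborFinset v).card ≤ 8 * k + 12 := by
  have hsum_univ : ∑ v, G.degree v = 2 * (n + k) := by
    rw [G.sum_degrees_eq_twice_card_edges, hedges]
  have hsplit := Finset.sum_add_sum_compl A (fun v => G.degree v)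
  have hcompl : ∑ v ∈ Aᶜ, G.degree v = 2 * Aᶜ.card := by
    rw [Finset.sum_congr rfl (fun v hv => ?_), Finset.sum_const, smul_eq_mul, mul_comm]
    have : v ∉ A := Finset.mem_compl.mp hv
    simp [hA, Finset.mem_filter] at this
    exact this
  have hcardc : Aᶜ.card = n - A.card := by
    simp [Finset.card_compl]
  have hAle : A.card ≤ n := by
    simpa using Finset.card_le_card (Finset.subset_univ A)
  rw [hsum_univ, hcompl, hcardc] at hsplit
  have h1 : ∑ v ∈ A, G.degree v = 2 * A.card + 2 * k := by omega
  refine ⟨h1, ?_⟩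
  -- bound |A|
  set B := A.filter (fun v => G.degree v = 1) with hB
  have hBle : B.card ≤ 2 := le_trans (Finset.card_le_card (by
    intro v hv
    simp only [hB, Finset.mem_filter] at hv
    simp [hv.2])) hdeg1
  have hBsub : B ⊆ A := Finset.filter_subset _ _
  have hsplitB : ∑ v ∈ B, G.degree v + ∑ v ∈ A \ B, G.degree v = ∑ v ∈ A, G.degree v := by
    rw [← Finset.sum_union (Finset.disjoint_sdiff)]
    rw [Finset.union_sdiff_of_subset hBsub]
  have hBsum : B.card ≤ ∑ v ∈ B, G.degree v := by
    calc B.card = ∑ _v ∈ B, 1 := by simp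
    _ ≤ ∑ v ∈ B, G.degree v := Finset.sum_le_sum (fun v _ => hiso v)
  have hABsum : 3 * (A \ B).card ≤ ∑ v ∈ A \ B, G.degree v := by
    calc 3 * (A \ B).card = ∑ _v ∈ A \ B, 3 := by simp [mul_comm]
    _ ≤ ∑ v ∈ A \ B, G.degree v := Finset.sum_le_sum (fun v hv => by
        simp only [Finset.mem_sdiff, hB, Finset.mem_filter, not_and] at hv
        have h2 : G.degree v ≠ 2 := by
          have := hv.1; rw [hA] at this; simpa using this
        have h1' : G.degree v ≠ 1 := hv.2 hv.1
        have h0 := hiso v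
        omega)
  have hcardAB : (A \ B).card = A.card - B.card := Finset.card_sdiff_of_subset hBsub
  have hBA : B.card ≤ A.card := Finset.card_le_card hBsub
  have hAcard : A.card ≤ 2 * k + 4 := by omega
  -- union bound
  have hbi : (A.biUnion fun v => G.neighborFinset v).card ≤ ∑ v ∈ A, G.degree v := by
    refine le_trans (Finset.card_biUnion_le) ?_
    exact le_of_eq (Finset.sum_congr rfl fun v _ => G.card_neighborFinset_eq_degree v)
  calc (A ∪ A.biUnion fun v => G.neighborFinset v).card
      ≤ A.card + (A.biUnion fun v => G.neighborFinset v).card := Finset.card_union_le _ _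
    _ ≤ A.card + ∑ v ∈ A, G.degree v := by omega
    _ = A.card + (2 * A.card + 2 * k) := by rw [h1]
    _ ≤ 8 * k + 12 := by omega
end
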